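/- arXiv:math/0607507 — 4 statements merged into one kernel-verified Lean document; each statement's English description precedes it below -/
import Mathlib

section
/- Let T be a nonnegative random variable and N(T) the mixed Poisson random variable with mixing distribution T. For every n ∈ ℕ, the n-th moment E[T^n] is finite if and only if the n-th moment E[N(T)^n] is finite. -/
open MeasureTheory ProbabilityTheory
open scoped ENNReal NNReal Nat

/-!
Given `T = t`, the factorial moments of a Poisson variable are `E[N (N - 1) ⋯ (N - n + 1)] = tⁿ`.
Since `k (k - 1) ⋯ (k - n + 1) ≤ kⁿ ≤ 2ⁿ k (k - 1) ⋯ (k - n + 1) + (2n)ⁿ`, integrating over the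
mixing distribution squeezes `E[Nⁿ]` between `E[Tⁿ]` and `2ⁿ E[Tⁿ] + (2n)ⁿ`.
-/

lemma Nat.pow_le_two_pow_mul_descFactorial_add (k n : ℕ) :
    k ^ n ≤ 2 ^ n * k.descFactorial n + (2 * n) ^ n := by
  rcases le_or_gt k (2 * n) with hk | hk
  · exact (Nat.pow_le_pow_left hk n).trans (Nat.le_add_left _ _)
  · -- for `i < n < k / 2` each factor `k - i` is at least `k / 2`
    refine Nat.le_add_right_of_le ?_
    calc k ^ n = ∏ _i ∈ Finset.range n, k := by simp
      _ ≤ ∏ i ∈ Finset.range n, 2 * (k - i) :=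
        Finset.prod_le_prod' fun i hi => by have := Finset.mem_range.mp hi; omega
      _ = 2 ^ n * k.descFactorial n := by
        rw [Finset.prod_mul_distrib, Finset.prod_const, Finset.card_range,
          Nat.descFactorial_eq_prod_range]

namespace ProbabilityTheory

lemma descFactorial_mul_poissonMeasure_singleton_add (r : ℝ≥0) (n j : ℕ) :
    ((j + n).descFactorial n : ℝ≥0∞) * poissonMeasure r {j + n}
      = (r : ℝ≥0∞) ^ n * poissonMeasure r {j} := by
  have hfact : ((j + n)! : ℝ) = j ! * (j + n).descFactorial n := by
    exact_mod_cast (Nat.add_sub_cancel j n ▸ Nat.factorial_mul_descFactorial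
      (Nat.le_add_left n j)).symm
  have hD : ((j + n).descFactorial n : ℝ) ≠ 0 :=
    Nat.cast_ne_zero.mpr (Nat.descFactorial_pos.mpr (Nat.le_add_left n j)).ne'
  simp only [poissonMeasure_singleton]
  rw [← ENNReal.ofReal_natCast, ← ENNReal.ofReal_mul (by positivity), ← ENNReal.ofReal_coe_nnreal,
    ← ENNReal.ofReal_pow (by positivity), ← ENNReal.ofReal_mul (by positivity), hfact, pow_add]
  congr 1
  field_simp

lemma lintegral_descFactorial_poissonMeasure (r : ℝ≥0) (n : ℕ) :
    ∫⁻ k, (k.descFactorial n : ℝ≥0∞) ∂poissonMeasure r = (r : ℝ≥0∞) ^ n := by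
  let f : ℕ → ℝ≥0∞ := fun k => k.descFactorial n * poissonMeasure r {k}
  have hshift : ∑' k, f k = ∑' j, f (j + n) := by
    have h := (ENNReal.summable (f := fun j => f (j + n))).hasSum.sum_range_add
    rw [h.tsum_eq, Finset.sum_eq_zero fun k hk => ?_, zero_add]
    simp [f, Nat.descFactorial_eq_zero_iff_lt.mpr (Finset.mem_range.mp hk)]
  rw [lintegral_countable', hshift]
  simp only [f, descFactorial_mul_poissonMeasure_singleton_add, ENNReal.tsum_mul_left]
  have hmass : ∑' j, poissonMeasure r {j} = 1 := by
    simpa using (lintegral_countable' (μ := poissonMeasure r) 1).symm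
  rw [hmass, mul_one]

lemma pow_le_lintegral_pow_poissonMeasure (r : ℝ≥0) (n : ℕ) :
    (r : ℝ≥0∞) ^ n ≤ ∫⁻ k, (k : ℝ≥0∞) ^ n ∂poissonMeasure r := by
  rw [← lintegral_descFactorial_poissonMeasure]
  exact lintegral_mono fun k => by dsimp only; exact_mod_cast Nat.descFactorial_le_pow k n

lemma lintegral_pow_poissonMeasure_le (r : ℝ≥0) (n : ℕ) :
    ∫⁻ k, (k : ℝ≥0∞) ^ n ∂poissonMeasure r ≤ 2 ^ n * (r : ℝ≥0∞) ^ n + (2 * n) ^ n :=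
  calc ∫⁻ k, (k : ℝ≥0∞) ^ n ∂poissonMeasure r
      ≤ ∫⁻ k, (2 ^ n * (k.descFactorial n : ℝ≥0∞) + (2 * n) ^ n) ∂poissonMeasure r :=
        lintegral_mono fun k => by
          dsimp only; exact_mod_cast Nat.pow_le_two_pow_mul_descFactorial_add k n
    _ = 2 ^ n * (r : ℝ≥0∞) ^ n + (2 * n) ^ n := by
        rw [lintegral_add_right _ measurable_const, lintegral_const_mul' _ _ (by simp),
          lintegral_descFactorial_poissonMeasure, lintegral_const, measure_univ, mul_one]

variable {Ω : Type*} [MeasurableSpace Ω]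

def IsMixedPoisson (μ : Measure Ω) (N : Ω → ℕ) (τ : Ω → ℝ≥0) : Prop :=
  ∀ k, μ {ω | N ω = k} = ∫⁻ ω, poissonMeasure (τ ω) {k} ∂μ

lemma isMixedPoisson_of_toReal_eq_integral {μ : Measure Ω} [IsFiniteMeasure μ] {N : Ω → ℕ}
    {τ : Ω → ℝ≥0} (hτ : Measurable τ)
    (h : ∀ k : ℕ, (μ {ω | N ω = k}).toReal =
      ∫ ω, Real.exp (-(τ ω : ℝ)) * (τ ω : ℝ) ^ k / (k ! : ℝ) ∂μ) :
    IsMixedPoisson μ N τ := by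
  intro k
  have hfin : ∫⁻ ω, poissonMeasure (τ ω) {k} ∂μ ≠ ∞ :=
    ne_top_of_le_ne_top (measure_ne_top μ Set.univ)
      (by simpa using lintegral_mono fun ω => prob_le_one (μ := poissonMeasure (τ ω)))
  rw [← ENNReal.toReal_eq_toReal_iff' (measure_ne_top μ _) hfin, h k,
    integral_eq_lintegral_of_nonneg_ae (ae_of_all _ fun ω => by positivity) (by fun_prop)]
  simp only [poissonMeasure_singleton]

lemma IsMixedPoisson.lintegral_comp {μ : Measure Ω} {N : Ω → ℕ} {τ : Ω → ℝ≥0}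
    (h : IsMixedPoisson μ N τ) (hN : Measurable N) (hτ : Measurable τ) (g : ℕ → ℝ≥0∞) :
    ∫⁻ ω, g (N ω) ∂μ = ∫⁻ ω, ∫⁻ k, g k ∂poissonMeasure (τ ω) ∂μ := by
  have hmeas : ∀ k, Measurable fun ω => poissonMeasure (τ ω) {k} := fun k => by
    simp only [poissonMeasure_singleton]
    fun_prop
  calc ∫⁻ ω, g (N ω) ∂μ = ∑' k, g k * μ.map N {k} := by
        rw [← lintegral_map .of_discrete hN, lintegral_countable']
    _ = ∑' k, ∫⁻ ω, g k * poissonMeasure (τ ω) {k} ∂μ := by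
        refine tsum_congr fun k => ?_
        rw [Measure.map_apply hN (measurableSet_singleton k), lintegral_const_mul _ (hmeas k)]
        exact congrArg _ (h k)
    _ = ∫⁻ ω, ∫⁻ k, g k ∂poissonMeasure (τ ω) ∂μ := by
        rw [← lintegral_tsum fun k => ((hmeas k).const_mul _).aemeasurable]
        simp only [lintegral_countable']

lemma lintegral_lintegral_pow_poissonMeasure_ne_top_iff {μ : Measure Ω} [IsFiniteMeasure μ]
    (τ : Ω → ℝ≥0) (n : ℕ) :
    ∫⁻ ω, ∫⁻ k, (k : ℝ≥0∞) ^ n ∂poissonMeasure (τ ω) ∂μ ≠ ∞ ↔ ∫⁻ ω, (τ ω : ℝ≥0∞) ^ n ∂μ ≠ ∞ := by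
  refine ⟨fun h => ne_top_of_le_ne_top h
    (lintegral_mono fun ω => pow_le_lintegral_pow_poissonMeasure (τ ω) n), fun h => ?_⟩
  refine ne_top_of_le_ne_top ?_ (lintegral_mono fun ω => lintegral_pow_poissonMeasure_le (τ ω) n)
  rw [lintegral_add_right _ measurable_const, lintegral_const_mul' _ _ (by simp), lintegral_const]
  finiteness

end ProbabilityTheory

/-- For a mixed Poisson random variable `N` with mixing random variable `T`,
the `n`-th moment of `T` is finite iff the `n`-th moment of `N` is finite. -/
theorem mixedPoisson_moment_finite_iff
    {Ω : Type*} [MeasureSpace Ω] [IsProbabilityMeasure (ℙ : Measure Ω)]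
    (T : Ω → ℝ) (hT : Measurable T) (hT0 : ∀ ω, 0 ≤ T ω)
    (N : Ω → ℕ) (hN : Measurable N)
    (hmix : ∀ k : ℕ, (ℙ {ω | N ω = k}).toReal =
      ∫ ω, Real.exp (-(T ω)) * (T ω) ^ k / (Nat.factorial k : ℝ) ∂ℙ)
    (n : ℕ) :
    Integrable (fun ω => (T ω) ^ n) ℙ ↔ Integrable (fun ω => (N ω : ℝ) ^ n) ℙ := by
  lift T to Ω → ℝ≥0 using hT0 with τ
  have hτ : Measurable τ := hT.subtype_mk
  rw [← lintegral_ofReal_ne_top_iff_integrable (by fun_prop) (ae_of_all _ fun ω => by positivity),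
    ← lintegral_ofReal_ne_top_iff_integrable (by fun_prop) (ae_of_all _ fun ω => by positivity)]
  simp_rw [ENNReal.ofReal_pow (NNReal.coe_nonneg _), ENNReal.ofReal_coe_nnreal,
    ENNReal.ofReal_pow (Nat.cast_nonneg _), ENNReal.ofReal_natCast]
  rw [(isMixedPoisson_of_toReal_eq_integral hτ hmix).lintegral_comp hN hτ (· ^ n),
    lintegral_lintegral_pow_poissonMeasure_ne_top_iff]
end

section
/- Let T be a nonnegative random variable with finite mean and let N(T) be the mixed Poisson random variable with mixing distribution T. Let α > 1 be non-integer and L slowly varying. Then P(T > x) ∼ x^{-α} L(x) as x → ∞ if and only if P(N(T) > x) ∼ x^{-α} L(x) as x → ∞. -/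
/-!
Conditionally on `T = t`, the event `N > x` has probability `1 - poissonCDF t ⌊x⌋₊`, which
increases with `t`. Splitting according to whether `T > v` gives the sandwich
`(1 - poissonCDF v ⌊x⌋₊) P(T > v) ≤ P(N > x) ≤ P(T > v) + (1 - poissonCDF v ⌊x⌋₊)`.
For `v = u x` with `u > 1` the factor tends to `1`, and for `v = s x` with `s < 1` the error term
decays exponentially by a Chernoff bound. The error is negligible against `W x = x ^ (-α) L x`
because an antitone function asymptotic to `W` forces `W` to decay at most polynomially (this
replaces Potter's bounds, which would need measurability of `L`). Regular variation turns
`W (u x) / W x` into `u ^ (-α)`, and letting `u, s → 1` squeezes both tail ratios to `1`.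
-/

open MeasureTheory ProbabilityTheory Filter Topology Finset Asymptotics
open scoped Nat

noncomputable def poissonMass (t : ℝ) (k : ℕ) : ℝ := Real.exp (-t) * t ^ k / k !

noncomputable def poissonCDF (t : ℝ) (m : ℕ) : ℝ := ∑ k ∈ range (m + 1), poissonMass t k

lemma poissonMass_nonneg {t : ℝ} (ht : 0 ≤ t) (k : ℕ) : 0 ≤ poissonMass t k := by
  unfold poissonMass; positivity

lemma hasSum_poissonMass_mul_pow (t r : ℝ) :
    HasSum (fun k => poissonMass t k * r ^ k) (Real.exp ((r - 1) * t)) := by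
  have h := (NormedSpace.expSeries_div_hasSum_exp (r * t)).mul_left (Real.exp (-t))
  rw [← Real.exp_eq_exp_ℝ, ← Real.exp_add] at h
  have hterm : (fun k => poissonMass t k * r ^ k) =
      fun k => Real.exp (-t) * ((r * t) ^ k / k !) := by
    ext k; unfold poissonMass; ring
  rwa [hterm, show (r - 1) * t = -t + r * t by ring]

lemma hasSum_poissonMass (t : ℝ) : HasSum (poissonMass t) 1 := by
  simpa using hasSum_poissonMass_mul_pow t 1

lemma hasSum_poissonMass_add (t : ℝ) (m : ℕ) :
    HasSum (fun k => poissonMass t (k + (m + 1))) (1 - poissonCDF t m) :=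
  (hasSum_nat_add_iff' (m + 1)).2 (hasSum_poissonMass t)

lemma poissonCDF_nonneg {t : ℝ} (ht : 0 ≤ t) (m : ℕ) : 0 ≤ poissonCDF t m :=
  sum_nonneg fun k _ => poissonMass_nonneg ht k

lemma poissonCDF_le_one {t : ℝ} (ht : 0 ≤ t) (m : ℕ) : poissonCDF t m ≤ 1 :=
  sub_nonneg.1 <| (hasSum_poissonMass_add t m).nonneg fun _ => poissonMass_nonneg ht _

lemma hasDerivAt_poissonCDF (t : ℝ) (m : ℕ) :
    HasDerivAt (poissonCDF · m) (-poissonMass t m) t := by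
  have hexp : HasDerivAt (fun t => Real.exp (-t)) (-Real.exp (-t)) t := by
    simpa using (hasDerivAt_neg t).exp
  induction m with
  | zero => simpa [poissonCDF, poissonMass] using hexp
  | succ m ih =>
    have hmass : HasDerivAt (poissonMass · (m + 1))
        (poissonMass t m - poissonMass t (m + 1)) t := by
      refine ((hexp.mul (hasDerivAt_pow (m + 1) t)).div_const ((m + 1)! : ℝ)).congr_deriv ?_
      simp only [poissonMass, Nat.factorial_succ, Nat.cast_mul, Nat.add_sub_cancel]
      field_simp
      push_cast
      ring
    have hsucc : (poissonCDF · (m + 1)) = fun s => poissonCDF s m + poissonMass s (m + 1) :=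
      funext fun s => sum_range_succ _ (m + 1)
    rw [hsucc]
    exact (ih.add hmass).congr_deriv (by ring)

lemma poissonCDF_antitoneOn (m : ℕ) : AntitoneOn (poissonCDF · m) (Set.Ici 0) :=
  antitoneOn_of_hasDerivWithinAt_nonpos (convex_Ici 0)
    (fun _ _ => (hasDerivAt_poissonCDF _ m).continuousAt.continuousWithinAt)
    (fun _ _ => (hasDerivAt_poissonCDF _ m).hasDerivWithinAt)
    (fun _ ht => neg_nonpos.2 (poissonMass_nonneg (interior_subset ht) m))

lemma poissonCDF_mul_pow_le {t r : ℝ} (ht : 0 ≤ t) (hr0 : 0 < r) (hr1 : r ≤ 1) (m : ℕ) :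
    poissonCDF t m * r ^ m ≤ Real.exp ((r - 1) * t) := by
  calc poissonCDF t m * r ^ m = ∑ k ∈ range (m + 1), poissonMass t k * r ^ m := by
        rw [poissonCDF, sum_mul]
    _ ≤ ∑ k ∈ range (m + 1), poissonMass t k * r ^ k := by
        refine sum_le_sum fun k hk => mul_le_mul_of_nonneg_left ?_ (poissonMass_nonneg ht k)
        exact pow_le_pow_of_le_one hr0.le hr1 (Nat.lt_succ_iff.1 (mem_range.1 hk))
    _ ≤ _ := sum_le_hasSum _ (fun k _ => mul_nonneg (poissonMass_nonneg ht k) (by positivity))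
        (hasSum_poissonMass_mul_pow t r)

lemma one_sub_poissonCDF_mul_pow_le {t r : ℝ} (ht : 0 ≤ t) (hr : 1 ≤ r) (m : ℕ) :
    (1 - poissonCDF t m) * r ^ (m + 1) ≤ Real.exp ((r - 1) * t) := by
  have hhead : 0 ≤ ∑ k ∈ range (m + 1), poissonMass t k * r ^ k :=
    sum_nonneg fun k _ => mul_nonneg (poissonMass_nonneg ht k) (by positivity)
  have htail : (1 - poissonCDF t m) * r ^ (m + 1)
      ≤ Real.exp ((r - 1) * t) - ∑ k ∈ range (m + 1), poissonMass t k * r ^ k :=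
    hasSum_le (fun k => mul_le_mul_of_nonneg_left (pow_le_pow_right₀ hr (by omega))
        (poissonMass_nonneg ht _))
      ((hasSum_poissonMass_add t m).mul_right (r ^ (m + 1)))
      ((hasSum_nat_add_iff' (m + 1)).2 (hasSum_poissonMass_mul_pow t r))
  linarith

lemma poissonCDF_mul_le_exp {v x : ℝ} (hv : 1 ≤ v) (hx : 0 ≤ x) {m : ℕ} (hm : (m : ℝ) ≤ x) :
    poissonCDF (v * x) m ≤ Real.exp (-(v - 1 - Real.log v) * x) := by
  have hv0 : 0 < v := by linarith
  have h := poissonCDF_mul_pow_le (t := v * x) (by positivity) (inv_pos.2 hv0)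
    (inv_le_one_of_one_le₀ hv) m
  have hpow : v ^ m ≤ Real.exp (Real.log v * x) := by
    rw [← Real.rpow_natCast, Real.rpow_def_of_pos hv0]
    exact Real.exp_le_exp.2 (mul_le_mul_of_nonneg_left hm (Real.log_nonneg hv))
  rw [inv_pow, ← div_eq_mul_inv, div_le_iff₀ (by positivity)] at h
  calc poissonCDF (v * x) m ≤ Real.exp ((v⁻¹ - 1) * (v * x)) * v ^ m := h
    _ ≤ Real.exp ((1 - v) * x) * Real.exp (Real.log v * x) := by
        rw [show (v⁻¹ - 1) * (v * x) = (1 - v) * x by field_simp]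
        exact mul_le_mul_of_nonneg_left hpow (Real.exp_nonneg _)
    _ = _ := by rw [← Real.exp_add]; ring_nf

lemma one_sub_poissonCDF_mul_le_exp {v x : ℝ} (hv0 : 0 < v) (hv1 : v ≤ 1) (hx : 0 ≤ x) {m : ℕ}
    (hm : x ≤ m + 1) : 1 - poissonCDF (v * x) m ≤ Real.exp (-(v - 1 - Real.log v) * x) := by
  have h := one_sub_poissonCDF_mul_pow_le (t := v * x) (by positivity)
    (one_le_inv_iff₀.2 ⟨hv0, hv1⟩) m
  have hpow : v ^ (m + 1) ≤ Real.exp (Real.log v * x) := by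
    rw [← Real.rpow_natCast, Real.rpow_def_of_pos hv0]
    exact Real.exp_le_exp.2 (mul_le_mul_of_nonpos_left (by push_cast; exact hm)
      (Real.log_nonpos hv0.le hv1))
  rw [inv_pow, ← div_eq_mul_inv, div_le_iff₀ (by positivity)] at h
  calc 1 - poissonCDF (v * x) m ≤ Real.exp ((v⁻¹ - 1) * (v * x)) * v ^ (m + 1) := h
    _ ≤ Real.exp ((1 - v) * x) * Real.exp (Real.log v * x) := by
        rw [show (v⁻¹ - 1) * (v * x) = (1 - v) * x by field_simp]
        exact mul_le_mul_of_nonneg_left hpow (Real.exp_nonneg _)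
    _ = _ := by rw [← Real.exp_add]; ring_nf

lemma tendsto_poissonCDF_mul_floor {u : ℝ} (hu : 1 < u) :
    Tendsto (fun x => poissonCDF (u * x) ⌊x⌋₊) atTop (𝓝 0) := by
  have hc : 0 < u - 1 - Real.log u := by
    linarith [Real.log_lt_sub_one_of_pos (by linarith : (0 : ℝ) < u) hu.ne']
  refine squeeze_zero' ?_ ?_ (Real.tendsto_exp_atBot.comp
    (tendsto_id.const_mul_atTop_of_neg (neg_neg_of_pos hc)))
  · filter_upwards [eventually_ge_atTop 0] with x hx
    exact poissonCDF_nonneg (by positivity) _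
  · filter_upwards [eventually_ge_atTop 0] with x hx
    exact poissonCDF_mul_le_exp hu.le hx (Nat.floor_le hx)

lemma isLittleO_one_sub_poissonCDF_mul_floor {s : ℝ} (hs0 : 0 < s) (hs1 : s < 1) (β : ℝ) :
    (fun x => 1 - poissonCDF (s * x) ⌊x⌋₊) =o[atTop] (fun x => x ^ β) := by
  have hc : 0 < s - 1 - Real.log s := by
    linarith [Real.log_lt_sub_one_of_pos hs0 hs1.ne]
  refine IsBigO.trans_isLittleO (IsBigO.of_bound 1 ?_) (isLittleO_exp_neg_mul_rpow_atTop hc β)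
  filter_upwards [eventually_ge_atTop 0] with x hx
  rw [one_mul, Real.norm_of_nonneg (sub_nonneg.2 (poissonCDF_le_one (by positivity) _)),
    Real.norm_of_nonneg (Real.exp_nonneg _)]
  exact one_sub_poissonCDF_mul_le_exp hs0 hs1.le hx (Nat.lt_floor_add_one x).le

def IsRegularlyVarying (W : ℝ → ℝ) (ρ : ℝ) : Prop :=
  ∀ t > 0, Tendsto (fun x => W (t * x) / W x) atTop (𝓝 (t ^ ρ))

lemma isRegularlyVarying_rpow_mul {L : ℝ → ℝ} (hLpos : ∀ x > 0, 0 < L x)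
    (hL : ∀ t > 0, Tendsto (fun x => L (t * x) / L x) atTop (𝓝 1)) (ρ : ℝ) :
    IsRegularlyVarying (fun x => x ^ ρ * L x) ρ := by
  intro t ht
  have h := (hL t ht).const_mul (t ^ ρ)
  rw [mul_one] at h
  refine h.congr' ?_
  filter_upwards [eventually_gt_atTop 0] with x hx
  rw [Real.mul_rpow ht.le hx.le]
  field_simp [(hLpos x hx).ne', (Real.rpow_pos_of_pos hx ρ).ne']

lemma IsRegularlyVarying.of_tendsto_div {W f : ℝ → ℝ} {ρ : ℝ} (hW : IsRegularlyVarying W ρ)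
    (hfW : Tendsto (fun x => f x / W x) atTop (𝓝 1)) : IsRegularlyVarying f ρ := by
  intro t ht
  have hscale := tendsto_id.const_mul_atTop ht
  have h := ((hfW.comp hscale).mul (hW t ht)).div hfW one_ne_zero
  rw [one_mul, div_one] at h
  refine h.congr' ?_
  have hne := hfW.eventually_ne one_ne_zero
  filter_upwards [hne, hscale.eventually hne] with x h1 h2
  simp only [Pi.div_apply, Function.comp_apply, id] at h2 ⊢
  field_simp [(div_ne_zero_iff.1 h1).2, (div_ne_zero_iff.1 h2).2]

theorem Antitone.le_mul_rpow_of_le_two_mul {f : ℝ → ℝ} (hf : Antitone f) {x₀ β : ℝ} (hx₀ : 0 < x₀)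
    (hβ : 0 ≤ β) (hf₀ : 0 ≤ f x₀) (hstep : ∀ y ≥ x₀, 2 ^ (-β) * f y ≤ f (2 * y)) {x : ℝ}
    (hx : x₀ ≤ x) : 2 ^ (-β) * f x₀ * x₀ ^ β ≤ f x * x ^ β := by
  have base : ∀ x, x₀ ≤ x → x ≤ 2 * x₀ → 2 ^ (-β) * f x₀ * x₀ ^ β ≤ f x * x ^ β := by
    intro x hx₁ hx₂
    have hfx : 2 ^ (-β) * f x₀ ≤ f x := (hstep x₀ le_rfl).trans (hf hx₂)
    have hc : 0 ≤ 2 ^ (-β) * f x₀ := by positivity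
    exact mul_le_mul hfx (Real.rpow_le_rpow hx₀.le hx₁ hβ) (by positivity) (hc.trans hfx)
  have dyadic : ∀ k : ℕ, ∀ x, x₀ ≤ x → x ≤ 2 ^ k * x₀ →
      2 ^ (-β) * f x₀ * x₀ ^ β ≤ f x * x ^ β := by
    intro k
    induction k with
    | zero => exact fun x hx₁ hx₂ => base x hx₁ (by linarith [pow_zero (2 : ℝ)])
    | succ k ih =>
      intro x hx₁ hx₂
      rcases le_or_gt x (2 * x₀) with hx₃ | hx₃
      · exact base x hx₁ hx₃
      have hhalf := ih (x / 2) (by linarith) (by rw [pow_succ] at hx₂; linarith)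
      have hx0 : 0 < x := by linarith
      calc 2 ^ (-β) * f x₀ * x₀ ^ β ≤ f (x / 2) * (x / 2) ^ β := hhalf
        _ = 2 ^ (-β) * f (x / 2) * x ^ β := by
          rw [Real.div_rpow hx0.le zero_le_two, Real.rpow_neg zero_le_two]; ring
        _ ≤ f x * x ^ β := by
          gcongr
          simpa only [mul_div_cancel₀ x two_ne_zero] using hstep (x / 2) (by linarith)
  obtain ⟨k, hk⟩ := pow_unbounded_of_one_lt (x / x₀) one_lt_two
  exact dyadic k x hx (by rw [div_lt_iff₀ hx₀] at hk; linarith)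

lemma Antitone.rpow_neg_isBigO {f : ℝ → ℝ} {ρ β : ℝ} (hf : Antitone f)
    (hrv : IsRegularlyVarying f ρ) (hfpos : ∀ᶠ x in atTop, 0 < f x) (hβ : -ρ < β) (hβ0 : 0 ≤ β) :
    (fun x => x ^ (-β)) =O[atTop] f := by
  have hstep : ∀ᶠ y in atTop, 2 ^ (-β) * f y ≤ f (2 * y) := by
    have hlt : (2 : ℝ) ^ (-β) < 2 ^ ρ := Real.rpow_lt_rpow_of_exponent_lt one_lt_two (by linarith)
    filter_upwards [(hrv 2 two_pos).eventually (lt_mem_nhds hlt), hfpos] with y h1 h2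
    exact ((lt_div_iff₀ h2).1 h1).le
  obtain ⟨x₀, hx₀⟩ := eventually_atTop.1 ((eventually_gt_atTop 0).and (hstep.and hfpos))
  obtain ⟨hx₀pos, -, hf₀⟩ := hx₀ x₀ le_rfl
  have hc : 0 < 2 ^ (-β) * f x₀ * x₀ ^ β := by positivity
  refine IsBigO.of_bound (2 ^ (-β) * f x₀ * x₀ ^ β)⁻¹ ?_
  filter_upwards [eventually_ge_atTop x₀] with x hx
  obtain ⟨hxpos, -, hfx⟩ := hx₀ x hx
  have hlow := hf.le_mul_rpow_of_le_two_mul hx₀pos hβ0 hf₀.le (fun y hy => (hx₀ y hy).2.1) hx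
  have hxβ : 0 < x ^ β := Real.rpow_pos_of_pos hxpos β
  rw [Real.norm_of_nonneg (by positivity), Real.norm_of_nonneg hfx.le, Real.rpow_neg hxpos.le]
  calc (x ^ β)⁻¹ = (2 ^ (-β) * f x₀ * x₀ ^ β)⁻¹ * (2 ^ (-β) * f x₀ * x₀ ^ β / x ^ β) := by
        field_simp
    _ ≤ (2 ^ (-β) * f x₀ * x₀ ^ β)⁻¹ * f x := by
        gcongr
        exact (div_le_iff₀ hxβ).2 hlow

lemma IsRegularlyVarying.tendsto_one_sub_poissonCDF_div {W f : ℝ → ℝ} {ρ : ℝ}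
    (hW : IsRegularlyVarying W ρ) (hWpos : ∀ᶠ x in atTop, 0 < W x) (hf : Antitone f)
    (hfW : Tendsto (fun x => f x / W x) atTop (𝓝 1)) {s : ℝ} (hs0 : 0 < s) (hs1 : s < 1) :
    Tendsto (fun x => (1 - poissonCDF (s * x) ⌊x⌋₊) / W x) atTop (𝓝 0) := by
  have hfpos : ∀ᶠ x in atTop, 0 < f x := by
    filter_upwards [hfW.eventually (lt_mem_nhds one_pos), hWpos] with x h1 h2
    exact (div_pos_iff_of_pos_right h2).1 h1
  have hfW' : f =O[atTop] W := isBigO_of_div_tendsto_nhds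
    (hWpos.mono fun x hx h0 => absurd h0 hx.ne') 1 hfW
  have hpoly := hf.rpow_neg_isBigO (hW.of_tendsto_div hfW) hfpos (β := |ρ| + 1)
    (by linarith [neg_le_abs ρ]) (by positivity)
  exact ((isLittleO_one_sub_poissonCDF_mul_floor hs0 hs1 _).trans_isBigO
    (hpoly.trans hfW')).tendsto_div_nhds_zero

lemma tendsto_rpow_nhds_one (ρ : ℝ) : Tendsto (fun u : ℝ => u ^ ρ) (𝓝 1) (𝓝 1) := by
  simpa using (Real.continuousAt_rpow_const 1 ρ (Or.inl one_ne_zero)).tendsto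

lemma tendsto_inv_rpow_nhds_one (ρ : ℝ) : Tendsto (fun u : ℝ => u⁻¹ ^ ρ) (𝓝 1) (𝓝 1) :=
  (tendsto_rpow_nhds_one ρ).comp (by simpa using tendsto_inv₀ (one_ne_zero' ℝ))

theorem tendsto_of_forall_eventually_bounds {ι : Type*} {l : Filter ι} {f : ι → ℝ} {b : ℝ}
    {P Q : Filter ℝ} [P.NeBot] [Q.NeBot] {lo hi : ℝ → ℝ} {g k : ℝ → ι → ℝ}
    (hlo : Tendsto lo P (𝓝 b)) (hhi : Tendsto hi Q (𝓝 b))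
    (hg : ∀ᶠ p in P, Tendsto (g p) l (𝓝 (lo p)) ∧ g p ≤ᶠ[l] f)
    (hk : ∀ᶠ q in Q, Tendsto (k q) l (𝓝 (hi q)) ∧ f ≤ᶠ[l] k q) :
    Tendsto f l (𝓝 b) := by
  refine tendsto_order.2 ⟨fun a ha => ?_, fun a ha => ?_⟩
  · obtain ⟨p, hap, hgp, hgf⟩ := ((hlo.eventually (lt_mem_nhds ha)).and hg).exists
    filter_upwards [hgp.eventually (lt_mem_nhds hap), hgf] with x h1 h2 using h1.trans_le h2
  · obtain ⟨q, hqa, hkq, hfk⟩ := ((hhi.eventually (gt_mem_nhds ha)).and hk).exists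
    filter_upwards [hkq.eventually (gt_mem_nhds hqa), hfk] with x h1 h2 using h2.trans_lt h1

lemma antitone_measureReal_gt {Ω : Type*} [MeasurableSpace Ω] (μ : Measure Ω) [IsFiniteMeasure μ]
    (X : Ω → ℝ) : Antitone fun x => μ.real {ω | X ω > x} :=
  fun _ _ hab => measureReal_mono fun _ hω => lt_of_le_of_lt hab hω

structure IsMixedPoisson {Ω : Type*} [MeasurableSpace Ω] (μ : Measure Ω) (N : Ω → ℕ) (T : Ω → ℝ) :
    Prop where
  measurable_mixing : Measurable T
  mixing_nonneg : ∀ ω, 0 ≤ T ω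
  measurable : Measurable N
  measureReal_eq : ∀ k, μ.real {ω | N ω = k} = ∫ ω, poissonMass (T ω) k ∂μ

namespace IsMixedPoisson

variable {Ω : Type*} [MeasurableSpace Ω] {μ : Measure Ω} [IsProbabilityMeasure μ]
  {N : Ω → ℕ} {T : Ω → ℝ} {W : ℝ → ℝ} {ρ : ℝ}

lemma integrable_poissonMass (h : IsMixedPoisson μ N T) (k : ℕ) :
    Integrable (fun ω => poissonMass (T ω) k) μ := by
  refine Integrable.of_bound ?_ 1 (ae_of_all _ fun ω => ?_)
  · exact ((by unfold poissonMass; fun_prop : Continuous (poissonMass · k)).measurable.comp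
      h.measurable_mixing).aestronglyMeasurable
  · rw [Real.norm_of_nonneg (poissonMass_nonneg (h.mixing_nonneg ω) k)]
    exact le_hasSum (hasSum_poissonMass _) k fun j _ => poissonMass_nonneg (h.mixing_nonneg ω) j

lemma integrable_poissonCDF (h : IsMixedPoisson μ N T) (m : ℕ) :
    Integrable (fun ω => poissonCDF (T ω) m) μ :=
  integrable_finsetSum _ fun k _ => h.integrable_poissonMass k

lemma measureReal_le (h : IsMixedPoisson μ N T) (m : ℕ) :
    μ.real {ω | N ω ≤ m} = ∫ ω, poissonCDF (T ω) m ∂μ := by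
  have hset : {ω | N ω ≤ m} = ⋃ k ∈ range (m + 1), {ω | N ω = k} := by
    ext ω; simp
  have hdisj : (↑(range (m + 1)) : Set ℕ).PairwiseDisjoint (fun k => {ω | N ω = k}) :=
    fun i _ j _ hij => Set.disjoint_left.2 fun ω hi hj => hij (hi.symm.trans hj)
  rw [hset, measureReal_biUnion_finset hdisj fun k _ => h.measurable (measurableSet_singleton k),
    sum_congr rfl fun k _ => h.measureReal_eq k,
    ← integral_finsetSum _ fun k _ => h.integrable_poissonMass k]
  rfl

lemma measureReal_gt (h : IsMixedPoisson μ N T) {x : ℝ} (hx : 0 ≤ x) :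
    μ.real {ω | (N ω : ℝ) > x} = ∫ ω, 1 - poissonCDF (T ω) ⌊x⌋₊ ∂μ := by
  have hset : {ω | (N ω : ℝ) > x} = {ω | N ω ≤ ⌊x⌋₊}ᶜ := by
    ext ω; simp [Nat.floor_lt hx]
  rw [hset, probReal_compl_eq_one_sub (measurableSet_le h.measurable measurable_const),
    h.measureReal_le, integral_sub (integrable_const 1) (h.integrable_poissonCDF _),
    integral_const, probReal_univ, one_smul]

lemma one_sub_poissonCDF_mul_le (h : IsMixedPoisson μ N T) {x v : ℝ} (hx : 0 ≤ x) (hv : 0 ≤ v) :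
    (1 - poissonCDF v ⌊x⌋₊) * μ.real {ω | T ω > v} ≤ μ.real {ω | (N ω : ℝ) > x} := by
  have hA : MeasurableSet {ω | T ω > v} := h.measurable_mixing measurableSet_Ioi
  rw [h.measureReal_gt hx, mul_comm, ← smul_eq_mul, ← integral_indicator_const _ hA]
  refine integral_mono ((integrable_const _).indicator hA)
    ((integrable_const 1).sub (h.integrable_poissonCDF _)) fun ω => ?_
  by_cases hω : ω ∈ {ω | T ω > v}
  · rw [Set.indicator_of_mem hω]
    exact sub_le_sub_left (poissonCDF_antitoneOn _ hv (h.mixing_nonneg ω) (le_of_lt hω)) 1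
  · rw [Set.indicator_of_notMem hω]
    exact sub_nonneg.2 (poissonCDF_le_one (h.mixing_nonneg ω) _)

lemma measureReal_gt_le_add (h : IsMixedPoisson μ N T) {x v : ℝ} (hx : 0 ≤ x) (hv : 0 ≤ v) :
    μ.real {ω | (N ω : ℝ) > x} ≤ μ.real {ω | T ω > v} + (1 - poissonCDF v ⌊x⌋₊) := by
  have hA : MeasurableSet {ω | T ω > v} := h.measurable_mixing measurableSet_Ioi
  have hbound : ∀ ω, 1 - poissonCDF (T ω) ⌊x⌋₊
      ≤ Set.indicator {ω | T ω > v} (fun _ => (1 : ℝ)) ω + (1 - poissonCDF v ⌊x⌋₊) := by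
    intro ω
    by_cases hω : ω ∈ {ω | T ω > v}
    · rw [Set.indicator_of_mem hω]
      linarith [poissonCDF_nonneg (h.mixing_nonneg ω) ⌊x⌋₊, poissonCDF_le_one hv ⌊x⌋₊]
    · rw [Set.indicator_of_notMem hω, zero_add]
      exact sub_le_sub_left (poissonCDF_antitoneOn _ (h.mixing_nonneg ω) hv (not_lt.1 hω)) 1
  have hint : ∫ ω, 1 - poissonCDF (T ω) ⌊x⌋₊ ∂μ
      ≤ ∫ ω, Set.indicator {ω | T ω > v} (fun _ => (1 : ℝ)) ω + (1 - poissonCDF v ⌊x⌋₊) ∂μ :=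
    integral_mono ((integrable_const 1).sub (h.integrable_poissonCDF _))
      (((integrable_const 1).indicator hA).add (integrable_const _)) hbound
  rwa [integral_add ((integrable_const 1).indicator hA) (integrable_const _),
    integral_indicator_const _ hA, integral_const, probReal_univ, smul_eq_mul, mul_one, one_smul,
    ← h.measureReal_gt hx] at hint

theorem tendsto_tail_div_of_tendsto_mixing_tail_div (h : IsMixedPoisson μ N T)
    (hW : IsRegularlyVarying W ρ) (hWpos : ∀ x > 0, 0 < W x)
    (hF : Tendsto (fun x => μ.real {ω | T ω > x} / W x) atTop (𝓝 1)) :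
    Tendsto (fun x => μ.real {ω | (N ω : ℝ) > x} / W x) atTop (𝓝 1) := by
  refine tendsto_of_forall_eventually_bounds (P := 𝓝[>] 1) (Q := 𝓝[<] 1)
    ((tendsto_rpow_nhds_one ρ).mono_left nhdsWithin_le_nhds)
    ((tendsto_rpow_nhds_one ρ).mono_left nhdsWithin_le_nhds)
    (g := fun u x => (1 - poissonCDF (u * x) ⌊x⌋₊) * (μ.real {ω | T ω > u * x} / W (u * x)) *
      (W (u * x) / W x))
    (k := fun s x => μ.real {ω | T ω > s * x} / W (s * x) * (W (s * x) / W x) +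
      (1 - poissonCDF (s * x) ⌊x⌋₊) / W x) ?_ ?_
  · filter_upwards [self_mem_nhdsWithin] with u (hu : 1 < u)
    have hu0 : 0 < u := by linarith
    refine ⟨by simpa using (((tendsto_poissonCDF_mul_floor hu).const_sub 1).mul
      (hF.comp (tendsto_id.const_mul_atTop hu0))).mul (hW u hu0), ?_⟩
    filter_upwards [eventually_gt_atTop 0] with x hx
    have hux : 0 < u * x := by positivity
    calc (1 - poissonCDF (u * x) ⌊x⌋₊) * (μ.real {ω | T ω > u * x} / W (u * x)) *
          (W (u * x) / W x)
        = (1 - poissonCDF (u * x) ⌊x⌋₊) * μ.real {ω | T ω > u * x} / W x := by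
          field_simp [(hWpos _ hux).ne']
      _ ≤ μ.real {ω | (N ω : ℝ) > x} / W x :=
          div_le_div_of_nonneg_right (h.one_sub_poissonCDF_mul_le hx.le hux.le) (hWpos x hx).le
  · filter_upwards [Ioo_mem_nhdsLT zero_lt_one] with s ⟨hs0, hs1⟩
    have herr := hW.tendsto_one_sub_poissonCDF_div ((eventually_gt_atTop 0).mono hWpos)
      (antitone_measureReal_gt μ T) hF hs0 hs1
    refine ⟨by simpa using ((hF.comp (tendsto_id.const_mul_atTop hs0)).mul (hW s hs0)).add herr,
      ?_⟩
    filter_upwards [eventually_gt_atTop 0] with x hx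
    have hsx : 0 < s * x := by positivity
    calc μ.real {ω | (N ω : ℝ) > x} / W x
        ≤ (μ.real {ω | T ω > s * x} + (1 - poissonCDF (s * x) ⌊x⌋₊)) / W x :=
          div_le_div_of_nonneg_right (h.measureReal_gt_le_add hx.le hsx.le) (hWpos x hx).le
      _ = _ := by field_simp [(hWpos _ hsx).ne']

theorem tendsto_mixing_tail_div_of_tendsto_tail_div (h : IsMixedPoisson μ N T)
    (hW : IsRegularlyVarying W ρ) (hWpos : ∀ x > 0, 0 < W x)
    (hG : Tendsto (fun x => μ.real {ω | (N ω : ℝ) > x} / W x) atTop (𝓝 1)) :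
    Tendsto (fun x => μ.real {ω | T ω > x} / W x) atTop (𝓝 1) := by
  refine tendsto_of_forall_eventually_bounds (P := 𝓝[<] 1) (Q := 𝓝[>] 1)
    ((tendsto_inv_rpow_nhds_one ρ).mono_left nhdsWithin_le_nhds)
    ((tendsto_inv_rpow_nhds_one ρ).mono_left nhdsWithin_le_nhds)
    (g := fun s y => (μ.real {ω | (N ω : ℝ) > s⁻¹ * y} / W (s⁻¹ * y) -
      (1 - poissonCDF y ⌊s⁻¹ * y⌋₊) / W (s⁻¹ * y)) * (W (s⁻¹ * y) / W y))
    (k := fun u y => μ.real {ω | (N ω : ℝ) > u⁻¹ * y} / W (u⁻¹ * y) * (W (u⁻¹ * y) / W y) /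
      (1 - poissonCDF y ⌊u⁻¹ * y⌋₊)) ?_ ?_
  · filter_upwards [Ioo_mem_nhdsLT zero_lt_one] with s ⟨hs0, hs1⟩
    have hscale := tendsto_id.const_mul_atTop (inv_pos.2 hs0)
    have herr : Tendsto (fun y => (1 - poissonCDF y ⌊s⁻¹ * y⌋₊) / W (s⁻¹ * y)) atTop (𝓝 0) := by
      simpa [Function.comp_def, mul_inv_cancel_left₀ hs0.ne'] using
        (hW.tendsto_one_sub_poissonCDF_div ((eventually_gt_atTop 0).mono hWpos)
          (antitone_measureReal_gt μ (fun ω => (N ω : ℝ))) hG hs0 hs1).comp hscale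
    refine ⟨by simpa using ((hG.comp hscale).sub herr).mul (hW s⁻¹ (inv_pos.2 hs0)), ?_⟩
    filter_upwards [eventually_gt_atTop 0] with y hy
    have hsy : 0 < s⁻¹ * y := by positivity
    rw [← sub_div, div_mul_div_cancel₀ (hWpos _ hsy).ne']
    refine div_le_div_of_nonneg_right ?_ (hWpos y hy).le
    have := h.measureReal_gt_le_add hsy.le hy.le
    linarith
  · filter_upwards [self_mem_nhdsWithin] with u (hu : 1 < u)
    have hu0 : 0 < u := by linarith
    have hscale := tendsto_id.const_mul_atTop (inv_pos.2 hu0)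
    have hfill : Tendsto (fun y => 1 - poissonCDF y ⌊u⁻¹ * y⌋₊) atTop (𝓝 1) := by
      simpa [Function.comp_def, mul_inv_cancel_left₀ hu0.ne'] using
        ((tendsto_poissonCDF_mul_floor hu).const_sub 1).comp hscale
    refine ⟨by simpa [Pi.div_def] using
      ((hG.comp hscale).mul (hW u⁻¹ (inv_pos.2 hu0))).div hfill one_ne_zero,
      ?_⟩
    filter_upwards [eventually_gt_atTop 0, hfill.eventually (lt_mem_nhds one_pos)] with y hy hq
    have huy : 0 < u⁻¹ * y := by positivity
    rw [div_mul_div_cancel₀ (hWpos _ huy).ne', div_right_comm]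
    refine div_le_div_of_nonneg_right ((le_div_iff₀ hq).2 ?_) (hWpos y hy).le
    simpa only [mul_comm] using h.one_sub_poissonCDF_mul_le huy.le hy.le

end IsMixedPoisson

theorem mixedPoisson_tail_equiv_general
    {Ω : Type*} [MeasureSpace Ω] [IsProbabilityMeasure (ℙ : Measure Ω)]
    (T : Ω → ℝ) (hT : Measurable T) (hT0 : ∀ ω, 0 ≤ T ω)
    (N : Ω → ℕ) (hN : Measurable N)
    (hmix : ∀ k : ℕ, (ℙ {ω | N ω = k}).toReal =
      ∫ ω, Real.exp (-(T ω)) * (T ω) ^ k / (Nat.factorial k : ℝ) ∂ℙ)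
    (α : ℝ)
    (L : ℝ → ℝ) (hLpos : ∀ x > 0, 0 < L x)
    (hL : ∀ t > 0, Tendsto (fun x => L (t * x) / L x) atTop (𝓝 1)) :
    Tendsto (fun x => (ℙ {ω | T ω > x}).toReal / (x ^ (-α) * L x)) atTop (𝓝 1) ↔
      Tendsto (fun x => (ℙ {ω | (N ω : ℝ) > x}).toReal / (x ^ (-α) * L x)) atTop (𝓝 1) := by
  have hNT : IsMixedPoisson ℙ N T := ⟨hT, hT0, hN, hmix⟩
  have hW := isRegularlyVarying_rpow_mul hLpos hL (-α)
  have hWpos : ∀ x > 0, 0 < x ^ (-α) * L x :=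
    fun x hx => mul_pos (Real.rpow_pos_of_pos hx _) (hLpos x hx)
  exact ⟨hNT.tendsto_tail_div_of_tendsto_mixing_tail_div hW hWpos,
    hNT.tendsto_mixing_tail_div_of_tendsto_tail_div hW hWpos⟩

/-- For a mixed Poisson random variable `N` with mixing random variable `T`
having finite mean, and `α ∈ (n, n+1)` non-integer with `n ≥ 1`, `L` slowly
varying: `P(T > x) ∼ x^{-α} L(x)` iff `P(N > x) ∼ x^{-α} L(x)` as `x → ∞`. -/
theorem mixedPoisson_tail_equiv
    {Ω : Type*} [MeasureSpace Ω] [IsProbabilityMeasure (ℙ : Measure Ω)]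
    (T : Ω → ℝ) (hT : Measurable T) (hT0 : ∀ ω, 0 ≤ T ω)
    (hTint : Integrable T ℙ)
    (N : Ω → ℕ) (hN : Measurable N)
    (hmix : ∀ k : ℕ, (ℙ {ω | N ω = k}).toReal =
      ∫ ω, Real.exp (-(T ω)) * (T ω) ^ k / (Nat.factorial k : ℝ) ∂ℙ)
    (α : ℝ) (n : ℕ) (hn : 1 ≤ n) (hα : α ∈ Set.Ioo (n : ℝ) (n + 1))
    (L : ℝ → ℝ) (hLpos : ∀ x > 0, 0 < L x)
    (hL : ∀ t > 0, Tendsto (fun x => L (t * x) / L x) atTop (𝓝 1)) :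
    Tendsto (fun x => (ℙ {ω | T ω > x}).toReal / (x ^ (-α) * L x)) atTop (𝓝 1) ↔
      Tendsto (fun x => (ℙ {ω | (N ω : ℝ) > x}).toReal / (x ^ (-α) * L x)) atTop (𝓝 1) :=
  mixedPoisson_tail_equiv_general T hT hT0 N hN hmix α L hLpos hL
end

section
/- Let r_n : (0,δ₀) → ℝ be a function and let c ∈ (0,1), d > 1, n ≥ 2 be such that r_n(s) = o(s^{n-1}) as s → 0⁺ and r_n(s) - d·r_n((c/d)·s) = o(s^n) as s → 0⁺. Then r_n(s) = o(s^n) as s → 0⁺. -/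
open Filter Topology Asymptotics

/-- Telescoping step: if `r(s) = o(s^{n-1})` and `r(s) - d r((c/d)s) = o(s^n)`
as `s → 0⁺`, with `0 < c < 1 < d` and `n ≥ 2`, then `r(s) = o(s^n)`. -/
theorem littleO_improvement_telescoping
    (r : ℝ → ℝ) (c d : ℝ) (hc : c ∈ Set.Ioo (0:ℝ) 1) (hd : 1 < d)
    (n : ℕ) (hn : 2 ≤ n)
    (h1 : r =o[𝓝[>] (0:ℝ)] fun s => s ^ (n - 1))
    (h2 : (fun s => r s - d * r (c / d * s)) =o[𝓝[>] (0:ℝ)] fun s => s ^ n) :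
    r =o[𝓝[>] (0:ℝ)] fun s => s ^ n := by
  obtain ⟨hc0, hc1⟩ := hc
  have hd0 : (0:ℝ) < d := lt_trans one_pos hd
  set q : ℝ := c / d with hqdef
  have hq0 : 0 < q := div_pos hc0 hd0
  have hdq : d * q = c := mul_div_cancel₀ c (ne_of_gt hd0)
  have hq1 : q < 1 := (div_lt_one hd0).mpr (hc1.trans hd)
  have hqle1 : q ≤ 1 := le_of_lt hq1
  -- d * q ^ n = c * q^(n-1) ≤ c < 1
  have hA : d * q ^ n < 1 := by
    have h : d * q ^ n = c * q ^ (n - 1) := by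
      have hp : q ^ n = q ^ (n - 1) * q := by rw [← pow_succ]; congr 1; omega
      rw [hp, ← hdq]; ring
    rw [h]
    calc c * q ^ (n - 1) ≤ c * 1 := by
          apply mul_le_mul_of_nonneg_left _ (le_of_lt hc0)
          exact pow_le_one₀ (le_of_lt hq0) hqle1
      _ = c := mul_one c
      _ < 1 := hc1
  have hA0 : 0 ≤ d * q ^ n := by positivity
  have hB : d * q ^ (n - 1) < 1 := by
    have h : d * q ^ (n - 1) = c * q ^ (n - 2) := by
      have hp : q ^ (n - 1) = q ^ (n - 2) * q := by rw [← pow_succ]; congr 1; omega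
      rw [hp, ← hdq]; ring
    rw [h]
    calc c * q ^ (n - 2) ≤ c * 1 := by
          apply mul_le_mul_of_nonneg_left _ (le_of_lt hc0)
          exact pow_le_one₀ (le_of_lt hq0) hqle1
      _ = c := mul_one c
      _ < 1 := hc1
  have hB0 : 0 ≤ d * q ^ (n - 1) := by positivity
  rw [isLittleO_iff]
  intro ε hε
  have h1n : (0:ℝ) < 1 - d * q ^ n := by linarith
  set ε' : ℝ := ε * (1 - d * q ^ n) with hε'def
  have hε' : 0 < ε' := mul_pos hε h1n
  have e2 : ∀ᶠ s in 𝓝[>] (0:ℝ), |r s - d * r (q * s)| ≤ ε' * |s ^ n| := by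
    have := h2.bound hε'
    simpa [Real.norm_eq_abs] using this
  have e1 : ∀ᶠ s in 𝓝[>] (0:ℝ), |r s| ≤ 1 * |s ^ (n - 1)| := by
    have := h1.bound one_pos
    simpa [Real.norm_eq_abs] using this
  have ecomb := e1.and e2
  rw [eventually_nhdsWithin_iff, Metric.eventually_nhds_iff] at ecomb
  obtain ⟨δ, hδ0, hδ⟩ := ecomb
  have key : ∀ s ∈ Set.Ioi (0:ℝ), dist s 0 < δ → |r s| ≤ ε * ‖s ^ n‖ := by
    intro s hs hsδ
    have hs0 : 0 < s := hs
    -- all scaled points satisfy the bounds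
    have hpt : ∀ k : ℕ, |r (q ^ k * s)| ≤ (q ^ k * s) ^ (n - 1) ∧
        |r (q ^ k * s) - d * r (q * (q ^ k * s))| ≤ ε' * (q ^ k * s) ^ n := by
      intro k
      have hqk0 : 0 < q ^ k * s := mul_pos (pow_pos hq0 k) hs0
      have hqkle : q ^ k * s ≤ s := by
        have : q ^ k ≤ 1 := pow_le_one₀ (le_of_lt hq0) hqle1
        nlinarith
      have hdist : dist (q ^ k * s) 0 < δ := by
        rw [Real.dist_eq, sub_zero, abs_of_pos hqk0]
        calc q ^ k * s ≤ s := hqkle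
          _ < δ := by
            have := hsδ
            rwa [Real.dist_eq, sub_zero, abs_of_pos hs0] at this
      have := hδ hdist hqk0
      constructor
      · have := this.1
        rwa [one_mul, abs_of_pos (pow_pos hqk0 _)] at this
      · have := this.2
        rwa [abs_of_pos (pow_pos hqk0 _)] at this
    -- telescoping partial sums
    set F : ℕ → ℝ := fun K => ∑ k ∈ Finset.range K,
      d ^ k * (r (q ^ k * s) - d * r (q * (q ^ k * s))) with hF
    have hFeq : ∀ K, F K = r s - d ^ K * r (q ^ K * s) := by
      intro K
      induction K with
      | zero => simp [hF]
      | succ K ih =>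
        have hstep : F (K + 1) = F K + d ^ K * (r (q ^ K * s) - d * r (q * (q ^ K * s))) :=
          Finset.sum_range_succ _ K
        rw [hstep, ih]
        have harg : q * (q ^ K * s) = q ^ (K + 1) * s := by ring
        rw [harg, pow_succ]
        ring
    -- bound on partial sums
    have hFbound : ∀ K, |F K| ≤ ε * s ^ n := by
      intro K
      calc |F K| ≤ ∑ k ∈ Finset.range K,
            |d ^ k * (r (q ^ k * s) - d * r (q * (q ^ k * s)))| :=
          Finset.abs_sum_le_sum_abs _ _
        _ ≤ ∑ k ∈ Finset.range K, (d * q ^ n) ^ k * (ε' * s ^ n) := by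
            apply Finset.sum_le_sum
            intro k _
            rw [abs_mul, abs_of_pos (pow_pos hd0 k)]
            have h := (hpt k).2
            calc d ^ k * |r (q ^ k * s) - d * r (q * (q ^ k * s))|
                ≤ d ^ k * (ε' * (q ^ k * s) ^ n) := by
                  exact mul_le_mul_of_nonneg_left h (le_of_lt (pow_pos hd0 k))
              _ = (d * q ^ n) ^ k * (ε' * s ^ n) := by
                  have hqq : (q ^ k * s) ^ n = (q ^ n) ^ k * s ^ n := by
                    rw [mul_pow, ← pow_mul, Nat.mul_comm, pow_mul]
                  rw [hqq, mul_pow]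
                  ring
        _ = (∑ k ∈ Finset.range K, (d * q ^ n) ^ k) * (ε' * s ^ n) := by
            rw [← Finset.sum_mul]
        _ ≤ (1 / (1 - d * q ^ n)) * (ε' * s ^ n) := by
            apply mul_le_mul_of_nonneg_right _ (by positivity)
            rw [geom_sum_eq (ne_of_lt hA)]
            have heq : ((d * q ^ n) ^ K - 1) / (d * q ^ n - 1)
                = (1 - (d * q ^ n) ^ K) / (1 - d * q ^ n) := by
              rw [div_eq_div_iff (by linarith) (ne_of_gt h1n)]
              ring
            rw [heq]
            have hpow0 : 0 ≤ (d * q ^ n) ^ K := pow_nonneg hA0 K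
            exact (div_le_div_iff_of_pos_right h1n).mpr (by linarith)
        _ = ε * s ^ n := by
            rw [hε'def]
            field_simp
    -- F K tends to r s
    have htail : Tendsto (fun K => d ^ K * r (q ^ K * s)) atTop (𝓝 0) := by
      have hbnd : ∀ K, |d ^ K * r (q ^ K * s)| ≤ s ^ (n - 1) * (d * q ^ (n - 1)) ^ K := by
        intro K
        rw [abs_mul, abs_of_pos (pow_pos hd0 K)]
        calc d ^ K * |r (q ^ K * s)| ≤ d ^ K * (q ^ K * s) ^ (n - 1) :=
            mul_le_mul_of_nonneg_left (hpt K).1 (le_of_lt (pow_pos hd0 K))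
          _ = s ^ (n - 1) * (d * q ^ (n - 1)) ^ K := by
              have hqq : (q ^ K * s) ^ (n - 1) = (q ^ (n - 1)) ^ K * s ^ (n - 1) := by
                rw [mul_pow, ← pow_mul, Nat.mul_comm, pow_mul]
              rw [hqq, mul_pow]
              ring
      have hlim : Tendsto (fun K => s ^ (n - 1) * (d * q ^ (n - 1)) ^ K) atTop (𝓝 0) := by
        have := tendsto_pow_atTop_nhds_zero_of_lt_one hB0 hB
        simpa using this.const_mul (s ^ (n - 1))
      apply squeeze_zero_norm _ hlim
      intro K
      rw [Real.norm_eq_abs]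
      exact hbnd K
    have hFto : Tendsto F atTop (𝓝 (r s)) := by
      have : F = fun K => r s - d ^ K * r (q ^ K * s) := funext hFeq
      rw [this]
      simpa using (tendsto_const_nhds (x := r s)).sub htail
    have : |r s| ≤ ε * s ^ n :=
      le_of_tendsto' (hFto.abs) hFbound
    calc |r s| ≤ ε * s ^ n := this
      _ = ε * ‖s ^ n‖ := by
          rw [Real.norm_eq_abs, abs_of_pos (pow_pos hs0 n)]
  rw [eventually_nhdsWithin_iff, Metric.eventually_nhds_iff]
  refine ⟨δ, hδ0, ?_⟩
  intro x hxδ hx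
  simpa [Real.norm_eq_abs] using key x hx hxδ
end

section
/- Let g : (0,δ₀) → ℝ satisfy g(s) ∼ C·s^α·L(1/s) as s → 0⁺, where C ≠ 0, α > 1, 0 < c < 1 < d with d·(c/d)^α < 1, and L slowly varying at infinity. Define r(s) := ∑_{k=0}^∞ d^k · g((c/d)^k · s). Then the series converges for small s > 0 and r(s) ∼ C · (d^α/(d^α - c^α d)) · s^α · L(1/s) as s → 0⁺. -/
open Filter Topology

set_option maxHeartbeats 1600000 in
/-- If `g(s) ∼ C s^α L(1/s)` as `s → 0⁺` with `C ≠ 0`, `α > 1`,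
`0 < c < 1 < d` (so that `d (c/d)^α < 1`), and `L` positive slowly varying,
then `r(s) := ∑_k d^k g((c/d)^k s)` converges for small `s > 0` and
`r(s) ∼ C (d^α/(d^α - c^α d)) s^α L(1/s)` as `s → 0⁺`. -/
theorem series_asymptotics_regular_variation
    (g : ℝ → ℝ) (C α c d : ℝ) (hC : C ≠ 0) (hα : 1 < α)
    (hc : c ∈ Set.Ioo (0:ℝ) 1) (hd : 1 < d) (hcd : d * (c / d) ^ α < 1)
    (L : ℝ → ℝ) (hLpos : ∀ x > 0, 0 < L x)
    (hL : ∀ t > 0, Tendsto (fun x => L (t * x) / L x) atTop (𝓝 1))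
    (hg : Tendsto (fun s => g s / (C * s ^ α * L (1 / s))) (𝓝[>] (0:ℝ)) (𝓝 1)) :
    (∀ᶠ s in 𝓝[>] (0:ℝ), Summable (fun k : ℕ => d ^ k * g ((c / d) ^ k * s))) ∧
      Tendsto (fun s => (∑' k : ℕ, d ^ k * g ((c / d) ^ k * s)) /
          (C * (d ^ α / (d ^ α - c ^ α * d)) * s ^ α * L (1 / s)))
        (𝓝[>] (0:ℝ)) (𝓝 1) := by
  obtain ⟨hc0, hc1⟩ := hc
  have hd0 : (0:ℝ) < d := one_pos.trans hd
  set ρ : ℝ := c / d with hρdef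
  clear_value ρ
  have hρ0 : 0 < ρ := by rw [hρdef]; exact div_pos hc0 hd0
  have hρ1 : ρ < 1 := by rw [hρdef]; exact (div_lt_one hd0).2 (hc1.trans hd)
  set q : ℝ := d * ρ ^ α with hqdef
  clear_value q
  have hq0 : 0 < q := by rw [hqdef]; exact mul_pos hd0 (Real.rpow_pos_of_pos hρ0 α)
  have hq1 : q < 1 := hcd
  have h1q : 0 < 1 - q := by linarith
  have hdα : 0 < d ^ α := Real.rpow_pos_of_pos hd0 α
  have hsub : d ^ α - c ^ α * d = d ^ α * (1 - q) := by
    have hcd' : ρ ^ α = c ^ α / d ^ α := by rw [hρdef]; exact Real.div_rpow hc0.le hd0.le α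
    rw [hqdef, hcd']
    field_simp
  have hDpos : 0 < d ^ α - c ^ α * d := by rw [hsub]; positivity
  have hDq : d ^ α / (d ^ α - c ^ α * d) = (1 - q)⁻¹ := by
    rw [hsub]; field_simp
  -- choose ε with q * (1 + ε) < 1
  set ε : ℝ := (q⁻¹ - 1) / 2 with hεdef
  clear_value ε
  have hqinv : 1 < q⁻¹ := (one_lt_inv₀ hq0).2 hq1
  have hε0 : 0 < ε := by rw [hεdef]; linarith
  have hqε : q * (1 + ε) < 1 := by
    have h' : q * (1 + ε) = (q + 1) / 2 := by
      rw [hεdef]; field_simp; ring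
    rw [h']; linarith
  -- Potter-type iterated bound for L
  have hLρ := hL ρ⁻¹ (inv_pos.2 hρ0)
  obtain ⟨X₀, hX₀⟩ : ∃ X₀ : ℝ, ∀ x ≥ X₀, L (ρ⁻¹ * x) / L x < 1 + ε :=
    eventually_atTop.1 (hLρ.eventually (gt_mem_nhds (by linarith : (1:ℝ) < 1 + ε)))
  set X : ℝ := max X₀ 1 with hXdef
  clear_value X
  have hX1 : (1:ℝ) ≤ X := by rw [hXdef]; exact le_max_right _ _
  have hXpos : (0:ℝ) < X := lt_of_lt_of_le one_pos hX1
  have hLstep : ∀ x ≥ X, L (ρ⁻¹ * x) ≤ (1 + ε) * L x := by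
    intro x hx
    have hx0 : 0 < x := lt_of_lt_of_le hXpos hx
    have h1 := hX₀ x (le_trans (le_trans (le_max_left X₀ 1) hXdef.ge) hx)
    have hLx : 0 < L x := hLpos x hx0
    rw [div_lt_iff₀ hLx] at h1
    linarith
  have hρinv1 : (1:ℝ) ≤ ρ⁻¹ := le_of_lt ((one_lt_inv₀ hρ0).2 hρ1)
  have hLiter : ∀ k : ℕ, ∀ x ≥ X, L ((ρ⁻¹) ^ k * x) ≤ (1 + ε) ^ k * L x := by
    intro k
    induction k with
    | zero => intro x hx; simp
    | succ n ih =>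
      intro x hx
      have hx0 : 0 < x := lt_of_lt_of_le hXpos hx
      have hge : X ≤ (ρ⁻¹) ^ n * x :=
        le_trans hx (le_mul_of_one_le_left hx0.le (one_le_pow₀ hρinv1))
      have h1 : (ρ⁻¹) ^ (n + 1) * x = ρ⁻¹ * ((ρ⁻¹) ^ n * x) := by ring
      calc L ((ρ⁻¹) ^ (n + 1) * x) = L (ρ⁻¹ * ((ρ⁻¹) ^ n * x)) := by rw [h1]
        _ ≤ (1 + ε) * L ((ρ⁻¹) ^ n * x) := hLstep _ hge
        _ ≤ (1 + ε) * ((1 + ε) ^ n * L x) := by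
            have := ih x hx
            nlinarith
        _ = (1 + ε) ^ (n + 1) * L x := by ring
  -- bound on g s / (C s^α L(1/s)) near 0
  have hball : ∀ᶠ y in 𝓝 (1:ℝ), |y| ≤ 2 := by
    filter_upwards [Metric.ball_mem_nhds (1:ℝ) one_pos] with y hy
    rw [Metric.mem_ball, Real.dist_eq] at hy
    have := abs_sub_abs_le_abs_sub y 1
    rw [abs_one] at this
    linarith
  have hh2 : ∀ᶠ s in 𝓝[>] (0:ℝ), |g s / (C * s ^ α * L (1 / s))| ≤ 2 :=
    hg.eventually hball
  obtain ⟨δ, hδ0, hδ⟩ : ∃ δ > (0:ℝ), ∀ s, 0 < s → s < δ →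
      |g s / (C * s ^ α * L (1 / s))| ≤ 2 := by
    rw [eventually_iff, mem_nhdsGT_iff_exists_Ioo_subset] at hh2
    obtain ⟨u, hu, hsub'⟩ := hh2
    exact ⟨u, hu, fun s hs1 hs2 => hsub' ⟨hs1, hs2⟩⟩
  set m : ℝ := min δ X⁻¹ with hmdef
  clear_value m
  have hm0 : 0 < m := by rw [hmdef]; exact lt_min hδ0 (inv_pos.2 hXpos)
  -- the normalized summand
  set F : ℝ → ℕ → ℝ := fun s k =>
    (1 - q) * q ^ k * (g (ρ ^ k * s) / (C * (ρ ^ k * s) ^ α * L (1 / (ρ ^ k * s)))) *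
      (L ((ρ⁻¹) ^ k * (1 / s)) / L (1 / s)) with hFdef
  -- the bound sequence
  clear_value F
  set bound : ℕ → ℝ := fun k => 2 * (1 - q) * (q * (1 + ε)) ^ k with hbounddef
  clear_value bound
  have hboundsum : Summable bound := by
    rw [hbounddef]
    exact (summable_geometric_of_lt_one (by positivity) hqε).mul_left _
  -- pointwise identity
  have hident : ∀ s : ℝ, 0 < s → ∀ k : ℕ, F s k =
      d ^ k * g (ρ ^ k * s) / (C * (d ^ α / (d ^ α - c ^ α * d)) * s ^ α * L (1 / s)) := by
    intro s hs k
    have hu0 : 0 < ρ ^ k * s := by positivity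
    have hLu : L (1 / (ρ ^ k * s)) ≠ 0 := (hLpos _ (by positivity)).ne'
    have hLs : L (1 / s) ≠ 0 := (hLpos _ (by positivity)).ne'
    have hsα : (0:ℝ) < s ^ α := Real.rpow_pos_of_pos hs α
    have hρα : (0:ℝ) < ρ ^ α := Real.rpow_pos_of_pos hρ0 α
    have huα : (ρ ^ k * s) ^ α = (ρ ^ α) ^ k * s ^ α := by
      rw [Real.mul_rpow (by positivity) hs.le, ← Real.rpow_natCast ρ k,
        ← Real.rpow_mul hρ0.le, mul_comm (k:ℝ) α, Real.rpow_mul hρ0.le,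
        Real.rpow_natCast]
    have harg : (ρ⁻¹) ^ k * (1 / s) = 1 / (ρ ^ k * s) := by
      rw [inv_pow]; field_simp
    have hρk : (0:ℝ) < ρ ^ k := by positivity
    have hqk : q ^ k = d ^ k * (ρ ^ α) ^ k := by rw [hqdef, mul_pow]
    have hραk : ((ρ:ℝ) ^ α) ^ k ≠ 0 := by positivity
    simp only [hFdef]
    rw [hDq, harg, huα, hqk]
    field_simp
  -- the bound on F
  have hbd' : ∀ s ∈ Set.Ioo (0:ℝ) m, ∀ k : ℕ, |F s k| ≤ bound k := by
    intro s hs k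
    have hs0 : 0 < s := hs.1
    have hu0 : 0 < ρ ^ k * s := by positivity
    have hρk1 : ρ ^ k ≤ 1 := pow_le_one₀ hρ0.le hρ1.le
    have huδ : ρ ^ k * s < δ :=
      lt_of_le_of_lt (mul_le_of_le_one_left hs0.le hρk1)
        (lt_of_lt_of_le hs.2 (hmdef.le.trans (min_le_left _ _)))
    have hXs : X ≤ 1 / s := by
      have h1 : s < X⁻¹ := lt_of_lt_of_le hs.2 (hmdef.le.trans (min_le_right _ _))
      rw [le_div_iff₀ hs0]
      have hXX : X * X⁻¹ = 1 := mul_inv_cancel₀ hXpos.ne'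
      nlinarith
    have hLs : 0 < L (1 / s) := hLpos _ (by positivity)
    have hA : |g (ρ ^ k * s) / (C * (ρ ^ k * s) ^ α * L (1 / (ρ ^ k * s)))| ≤ 2 :=
      hδ _ hu0 huδ
    have hBpos : 0 ≤ L ((ρ⁻¹) ^ k * (1 / s)) / L (1 / s) := by
      have := hLpos ((ρ⁻¹) ^ k * (1 / s)) (by positivity)
      positivity
    have hB : L ((ρ⁻¹) ^ k * (1 / s)) / L (1 / s) ≤ (1 + ε) ^ k := by
      rw [div_le_iff₀ hLs]
      exact hLiter k (1 / s) hXs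
    have habs : |F s k| = (1 - q) * q ^ k *
        |g (ρ ^ k * s) / (C * (ρ ^ k * s) ^ α * L (1 / (ρ ^ k * s)))| *
        (L ((ρ⁻¹) ^ k * (1 / s)) / L (1 / s)) := by
      rw [hFdef]
      rw [abs_mul, abs_mul, abs_of_nonneg (by positivity : (0:ℝ) ≤ (1 - q) * q ^ k),
        abs_of_nonneg hBpos]
    rw [habs, hbounddef]
    calc (1 - q) * q ^ k *
        |g (ρ ^ k * s) / (C * (ρ ^ k * s) ^ α * L (1 / (ρ ^ k * s)))| *
        (L ((ρ⁻¹) ^ k * (1 / s)) / L (1 / s))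
        ≤ (1 - q) * q ^ k * 2 * (1 + ε) ^ k := by
          apply mul_le_mul _ hB hBpos (by positivity)
          exact mul_le_mul_of_nonneg_left hA (by positivity)
      _ = 2 * (1 - q) * (q * (1 + ε)) ^ k := by
          rw [mul_pow]; ring
  have hbd : ∀ᶠ s in 𝓝[>] (0:ℝ), ∀ k : ℕ, |F s k| ≤ bound k := by
    filter_upwards [Ioo_mem_nhdsGT_of_mem (Set.left_mem_Ico.2 hm0)] with s hs
    exact hbd' s hs
  -- pointwise limits
  have hlim : ∀ k : ℕ, Tendsto (fun s => F s k) (𝓝[>] (0:ℝ)) (𝓝 ((1 - q) * q ^ k)) := by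
    intro k
    have t1 : Tendsto (fun s : ℝ => ρ ^ k * s) (𝓝[>] (0:ℝ)) (𝓝[>] (0:ℝ)) := by
      apply tendsto_nhdsWithin_of_tendsto_nhds_of_eventually_within
      · have : Tendsto (fun s : ℝ => ρ ^ k * s) (𝓝 0) (𝓝 (ρ ^ k * 0)) :=
          (continuous_const.mul continuous_id).tendsto 0
        rw [mul_zero] at this
        exact this.mono_left nhdsWithin_le_nhds
      · filter_upwards [self_mem_nhdsWithin] with s hs
        have : (0:ℝ) < s := hs
        have hρk : (0:ℝ) < ρ ^ k := by positivity
        exact mul_pos hρk this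
    have th : Tendsto (fun s => g (ρ ^ k * s) /
        (C * (ρ ^ k * s) ^ α * L (1 / (ρ ^ k * s)))) (𝓝[>] (0:ℝ)) (𝓝 1) := hg.comp t1
    have tinv : Tendsto (fun s : ℝ => 1 / s) (𝓝[>] (0:ℝ)) atTop := by
      simpa [one_div] using tendsto_inv_nhdsGT_zero
    have tL : Tendsto (fun s => L ((ρ⁻¹) ^ k * (1 / s)) / L (1 / s))
        (𝓝[>] (0:ℝ)) (𝓝 1) :=
      (hL ((ρ⁻¹) ^ k) (by positivity)).comp tinv
    have hconst : Tendsto (fun _ : ℝ => (1 - q) * q ^ k) (𝓝[>] (0:ℝ))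
        (𝓝 ((1 - q) * q ^ k)) := tendsto_const_nhds
    have := (hconst.mul th).mul tL
    simpa [hFdef, Function.comp] using this
  -- Tannery's theorem
  have hT : Tendsto (fun s => ∑' k, F s k) (𝓝[>] (0:ℝ))
      (𝓝 (∑' k : ℕ, (1 - q) * q ^ k)) :=
    tendsto_tsum_of_dominated_convergence hboundsum hlim
      (by simpa [Real.norm_eq_abs] using hbd)
  have htsum : (∑' k : ℕ, (1 - q) * q ^ k) = 1 := by
    rw [tsum_mul_left, tsum_geometric_of_lt_one hq0.le hq1,
      mul_inv_cancel₀ h1q.ne']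
  rw [htsum] at hT
  -- nonvanishing of the normalizer
  have hK : ∀ s : ℝ, 0 < s →
      C * (d ^ α / (d ^ α - c ^ α * d)) * s ^ α * L (1 / s) ≠ 0 := by
    intro s hs
    have h1 : (0:ℝ) < s ^ α := Real.rpow_pos_of_pos hs α
    have h2 : (0:ℝ) < L (1 / s) := hLpos _ (by positivity)
    have h3 : (0:ℝ) < d ^ α / (d ^ α - c ^ α * d) := div_pos hdα hDpos
    exact mul_ne_zero (mul_ne_zero (mul_ne_zero hC h3.ne') h1.ne') h2.ne'
  constructor
  · -- summability
    filter_upwards [Ioo_mem_nhdsGT_of_mem (Set.left_mem_Ico.2 hm0)] with s hs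
    have hsum : Summable (fun k => F s k) :=
      Summable.of_norm_bounded hboundsum
        (by simpa [Real.norm_eq_abs] using hbd' s hs)
    have := hsum.mul_right (C * (d ^ α / (d ^ α - c ^ α * d)) * s ^ α * L (1 / s))
    refine this.congr fun k => ?_
    rw [hident s hs.1 k, div_mul_cancel₀ _ (hK s hs.1)]
  · -- asymptotics
    refine hT.congr' ?_
    filter_upwards [self_mem_nhdsWithin] with s hs
    have hs0 : (0:ℝ) < s := hs
    calc (∑' k, F s k)
        = ∑' k, d ^ k * g (ρ ^ k * s) /
            (C * (d ^ α / (d ^ α - c ^ α * d)) * s ^ α * L (1 / s)) :=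
          tsum_congr fun k => hident s hs0 k
      _ = (∑' k, d ^ k * g (ρ ^ k * s)) /
            (C * (d ^ α / (d ^ α - c ^ α * d)) * s ^ α * L (1 / s)) :=
          tsum_div_const
end
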